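/- arXiv:2009.03835 — 5 statements merged into one kernel-verified Lean document; each statement's English description precedes it below -/
import Mathlib

section
/- A smooth unit-speed curve γ(t) = (u(t), v(t)) in the Gans model satisfies the geodesic equations if and only if u'' = u and v'' = v; hence every geodesic has the form u(t) = Ae^t + Be^{-t}, v(t) = Ce^t + De^{-t} for constants A, B, C, D ∈ ℝ. -/
lemma ode_exp (u : ℝ → ℝ) (hu : ContDiff ℝ (⊤ : ℕ∞) u)
    (h : ∀ t, deriv (deriv u) t = u t) :
    ∃ A B : ℝ, ∀ t, u t = A * Real.exp t + B * Real.exp (-t) := by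
  have hd1 : Differentiable ℝ u := hu.differentiable (by simp)
  have hu' : ContDiff ℝ ((⊤:ℕ∞):WithTop ℕ∞) u := hu.of_le (by simp)
  have hd2 : Differentiable ℝ (deriv u) :=
    (contDiff_infty_iff_deriv.mp hu').2.differentiable (by simp)
  have key : ∀ t, HasDerivAt u (deriv u t) t := fun t => (hd1 t).hasDerivAt
  have key2 : ∀ t, HasDerivAt (deriv u) (u t) t := by
    intro t; have := (hd2 t).hasDerivAt; rwa [h t] at this
  set f : ℝ → ℝ := fun t => (u t + deriv u t) * Real.exp (-t) with hf
  set g : ℝ → ℝ := fun t => (u t - deriv u t) * Real.exp t with hg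
  have hfd : ∀ t, HasDerivAt f 0 t := by
    intro t
    have h1 : HasDerivAt (fun t => u t + deriv u t) (deriv u t + u t) t :=
      (key t).add (key2 t)
    have h2 : HasDerivAt (fun t : ℝ => Real.exp (-t)) (-Real.exp (-t)) t := by
      simpa [Function.comp_def] using (Real.hasDerivAt_exp (-t)).comp t (hasDerivAt_neg t)
    have : HasDerivAt (fun y => (u y + deriv u y) * Real.exp (-y))
        ((deriv u t + u t) * Real.exp (-t) + (u t + deriv u t) * -Real.exp (-t)) t := h1.mul h2
    convert this using 1; ring
  have hgd : ∀ t, HasDerivAt g 0 t := by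
    intro t
    have h1 : HasDerivAt (fun t => u t - deriv u t) (deriv u t - u t) t :=
      (key t).sub (key2 t)
    have : HasDerivAt (fun y => (u y - deriv u y) * Real.exp y)
        ((deriv u t - u t) * Real.exp t + (u t - deriv u t) * Real.exp t) t :=
      h1.mul (Real.hasDerivAt_exp t)
    convert this using 1; ring
  have hfc : ∀ t, f t = f 0 := fun t =>
    is_const_of_deriv_eq_zero (fun s => (hfd s).differentiableAt)
      (fun s => (hfd s).deriv) t 0
  have hgc : ∀ t, g t = g 0 := fun t =>
    is_const_of_deriv_eq_zero (fun s => (hgd s).differentiableAt)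
      (fun s => (hgd s).deriv) t 0
  refine ⟨(u 0 + deriv u 0) / 2, (u 0 - deriv u 0) / 2, fun t => ?_⟩
  have h1 := hfc t
  have h2 := hgc t
  simp only [hf, hg, Real.exp_zero, mul_one, neg_zero] at h1 h2
  have he : Real.exp (-t) * Real.exp t = 1 := by
    rw [← Real.exp_add]; simp
  have hne : Real.exp t ≠ 0 := (Real.exp_pos t).ne'
  have hne' : Real.exp (-t) ≠ 0 := (Real.exp_pos _).ne'
  have he' : Real.exp t * Real.exp (-t) = 1 := by rw [← Real.exp_add]; simp
  have e1 : u t + deriv u t = (u 0 + deriv u 0) * Real.exp t := by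
    calc u t + deriv u t = (u t + deriv u t) * (Real.exp (-t) * Real.exp t) := by
          rw [he, mul_one]
      _ = (u 0 + deriv u 0) * Real.exp t := by rw [← mul_assoc, h1]
  have e2 : u t - deriv u t = (u 0 - deriv u 0) * Real.exp (-t) := by
    calc u t - deriv u t = (u t - deriv u t) * (Real.exp t * Real.exp (-t)) := by
          rw [he', mul_one]
      _ = (u 0 - deriv u 0) * Real.exp (-t) := by rw [← mul_assoc, h2]
  linarith [e1, e2]



/-- Geodesics in the Gans model: a smooth unit-speed curve γ = (u, v) satisfies the
geodesic equations iff u'' = u and v'' = v, hence geodesics are of the stated form. -/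
theorem gans_geodesics (u v : ℝ → ℝ)
    (hu : ContDiff ℝ (⊤ : ℕ∞) u) (hv : ContDiff ℝ (⊤ : ℕ∞) v)
    -- unit speed: h(γ')(γ',γ') = 1
    (hunit : ∀ t : ℝ,
      ((1 + v t ^ 2) * (deriv u t) ^ 2 - 2 * u t * v t * deriv u t * deriv v t
        + (1 + u t ^ 2) * (deriv v t) ^ 2) / (1 + u t ^ 2 + v t ^ 2) = 1) :
    -- the geodesic equations (with the Christoffel symbols of the Gans metric)
    ((∀ t : ℝ,
      deriv (deriv u) t
        + (-(u t * (1 + v t ^ 2)) / (1 + u t ^ 2 + v t ^ 2)) * (deriv u t) ^ 2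
        + 2 * ((u t ^ 2 * v t) / (1 + u t ^ 2 + v t ^ 2)) * deriv u t * deriv v t
        + (-(u t ^ 3 + u t) / (1 + u t ^ 2 + v t ^ 2)) * (deriv v t) ^ 2 = 0 ∧
      deriv (deriv v) t
        + (-(v t ^ 3 + v t) / (1 + u t ^ 2 + v t ^ 2)) * (deriv u t) ^ 2
        + 2 * ((u t * v t ^ 2) / (1 + u t ^ 2 + v t ^ 2)) * deriv u t * deriv v t
        + (-((1 + u t ^ 2) * v t) / (1 + u t ^ 2 + v t ^ 2)) * (deriv v t) ^ 2 = 0)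
    ↔ (∀ t : ℝ, deriv (deriv u) t = u t ∧ deriv (deriv v) t = v t)) ∧
    -- hence every geodesic has the exponential form
    ((∀ t : ℝ, deriv (deriv u) t = u t ∧ deriv (deriv v) t = v t) →
      ∃ A B C D : ℝ, ∀ t : ℝ,
        u t = A * Real.exp t + B * Real.exp (-t) ∧
        v t = C * Real.exp t + D * Real.exp (-t)) := by
  constructor
  · constructor
    · intro hgeo t
      obtain ⟨h1, h2⟩ := hgeo t
      have hW : (0:ℝ) < 1 + u t ^ 2 + v t ^ 2 := by positivity
      have hU := hunit t
      rw [div_eq_one_iff_eq hW.ne'] at hU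
      have hWne := hW.ne'
      constructor
      · have key : deriv (deriv u) t * (1 + u t ^ 2 + v t ^ 2)
            = u t * (1 + u t ^ 2 + v t ^ 2) := by
          field_simp at h1
          linear_combination h1 + u t * hU
        exact mul_right_cancel₀ hWne key
      · have key : deriv (deriv v) t * (1 + u t ^ 2 + v t ^ 2)
            = v t * (1 + u t ^ 2 + v t ^ 2) := by
          field_simp at h2
          linear_combination h2 + v t * hU
        exact mul_right_cancel₀ hWne key
    · intro hode t
      obtain ⟨h1, h2⟩ := hode t
      have hW : (0:ℝ) < 1 + u t ^ 2 + v t ^ 2 := by positivity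
      have hU := hunit t
      rw [div_eq_one_iff_eq hW.ne'] at hU
      have hWne := hW.ne'
      constructor
      · rw [h1]; field_simp; linear_combination (-(u t)) * hU
      · rw [h2]; field_simp; linear_combination (-(v t)) * hU
  · intro hode
    obtain ⟨A, B, hAB⟩ := ode_exp u hu fun t => (hode t).1
    obtain ⟨C, D, hCD⟩ := ode_exp v hv fun t => (hode t).2
    exact ⟨A, B, C, D, fun t => ⟨hAB t, hCD t⟩⟩
end

section
/- Every rotation about the origin, w ↦ e^{iθ}w (identifying ℝ² with ℂ), is an isometry of the Gans metric h on ℝ². -/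
/-- The Gans metric on ℝ² as a bilinear form at each point. -/
noncomputable def gansBil (p : ℝ × ℝ) (X Y : ℝ × ℝ) : ℝ :=
  ((1 + p.2 ^ 2) * X.1 * Y.1 - p.1 * p.2 * (X.1 * Y.2 + X.2 * Y.1)
    + (1 + p.1 ^ 2) * X.2 * Y.2) / (1 + p.1 ^ 2 + p.2 ^ 2)

/-- Rotation of ℝ² ≅ ℂ about the origin by angle θ, w ↦ e^{iθ} w. -/
noncomputable def rot (θ : ℝ) (p : ℝ × ℝ) : ℝ × ℝ :=
  (p.1 * Real.cos θ - p.2 * Real.sin θ, p.1 * Real.sin θ + p.2 * Real.cos θ)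

/-- Every rotation about the origin is an isometry of the Gans metric. -/
theorem rotation_isometry_of_gans (θ : ℝ) :
    ∀ p X Y : ℝ × ℝ,
      gansBil (rot θ p) (rot θ X) (rot θ Y) = gansBil p X Y := by
  intro p X Y
  have hc : Real.sin θ ^ 2 + Real.cos θ ^ 2 = 1 := Real.sin_sq_add_cos_sq θ
  simp only [gansBil, rot]
  have hd : 1 + (p.1 * Real.cos θ - p.2 * Real.sin θ) ^ 2
      + (p.1 * Real.sin θ + p.2 * Real.cos θ) ^ 2 = 1 + p.1 ^ 2 + p.2 ^ 2 := by
    linear_combination (p.1 ^ 2 + p.2 ^ 2) * hc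
  rw [hd]
  congr 1
  linear_combination (Real.sin θ ^ 2*p.1 ^ 2*X.2*Y.2 + Real.cos θ ^ 2*p.1 ^ 2*X.2*Y.2 - Real.sin θ ^ 2*p.1*p.2*X.2*Y.1 - Real.sin θ ^ 2*p.1*p.2*X.1*Y.2 + Real.cos θ ^ 2*p.2 ^ 2*X.1*Y.1 - Real.cos θ ^ 2*p.1*p.2*X.1*Y.2 - Real.cos θ ^ 2*p.1*p.2*X.2*Y.1 + Real.sin θ ^ 2*p.2 ^ 2*X.1*Y.1 + X.1*Y.1 + X.2*Y.2 + p.1 ^ 2*X.2*Y.2 - p.1*p.2*X.2*Y.1 - p.1*p.2*X.1*Y.2 + p.2 ^ 2*X.1*Y.1) * hc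
end

section
/- Let S be the graph of a smooth f in the Heisenberg group with unit normal η = (-p E₁ - q E₂ + E₃)/w, where p = f_x + y/2, q = f_y - x/2, w = √(1+p²+q²). Then the second fundamental form coefficients are L = (f_xx + pq)/w, M = (f_xy + (q² - p²)/2)/w, N = (f_yy - pq)/w. -/
open scoped BigOperators

set_option maxHeartbeats 2000000

/-- The connection coefficients Γᵢⱼᵏ = ⟨∇_{E_i}E_j, E_k⟩ of the Levi-Civita
connection of the left-invariant Heisenberg metric in the orthonormal frame
E₁ = ∂x - (y/2)∂z, E₂ = ∂y + (x/2)∂z, E₃ = ∂z. -/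
noncomputable def heisGamma : Fin 3 → Fin 3 → Fin 3 → ℝ :=
  ![![![0, 0, 0], ![0, 0, 1/2], ![0, -(1/2), 0]],
    ![![0, 0, -(1/2)], ![0, 0, 0], ![1/2, 0, 0]],
    ![![0, -(1/2), 0], ![1/2, 0, 0], ![0, 0, 0]]]

/-- Covariant derivative (in frame components, along the surface parameters) of a
frame vector field `V` in a direction whose parameter-space derivative is `d` and
whose frame components are `dir`. -/
noncomputable def heisCov (d : ℝ × ℝ) (dir : Fin 3 → ℝ)
    (V : ℝ × ℝ → Fin 3 → ℝ) (z : ℝ × ℝ) : Fin 3 → ℝ :=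
  fun k => fderiv ℝ (fun w => V w k) z d +
    ∑ i : Fin 3, ∑ j : Fin 3, dir i * V z j * heisGamma i j k

/-- Quotient rule for `HasFDerivAt` with real-valued functions. -/
lemma heis_hasFDerivAt_div {E : Type*} [NormedAddCommGroup E] [NormedSpace ℝ E]
    {c d : E → ℝ} {c' d' : E →L[ℝ] ℝ} {x : E}
    (hc : HasFDerivAt c c' x) (hd : HasFDerivAt d d' x) (hx : d x ≠ 0) :
    HasFDerivAt (fun y => c y / d y)
      ((d x)⁻¹ • c' + (-(c x) / d x ^ 2) • d') x := by
  have hinv : HasFDerivAt (fun y => (d y)⁻¹) ((-(d x ^ 2)⁻¹ : ℝ) • d') x :=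
    (hasDerivAt_inv hx).comp_hasFDerivAt x hd
  have h := hc.mul hinv
  have hfun : (fun y => c y / d y) = fun y => c y * (d y)⁻¹ := by
    funext y; rw [div_eq_mul_inv]
  rw [hfun]
  refine h.congr_fderiv ?_
  ext y
  simp only [ContinuousLinearMap.add_apply, ContinuousLinearMap.coe_smul',
    Pi.smul_apply, smul_eq_mul]
  ring

/-- Square rule. -/
lemma heis_hasFDerivAt_sq {E : Type*} [NormedAddCommGroup E] [NormedSpace ℝ E]
    {c : E → ℝ} {c' : E →L[ℝ] ℝ} {x : E} (hc : HasFDerivAt c c' x) :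
    HasFDerivAt (fun y => c y ^ 2) (((2:ℝ) * c x ^ 1) • c') x := by
  have h := hc.mul hc
  have hfun : (fun y => c y ^ 2) = fun y => c y * c y := by
    funext y; ring
  rw [hfun]
  refine h.congr_fderiv ?_
  ext y
  simp only [ContinuousLinearMap.add_apply, ContinuousLinearMap.coe_smul',
    Pi.smul_apply, smul_eq_mul]
  ring

/-- Second fundamental form of a graph z = f(x,y) in the Heisenberg group with
respect to the unit normal η = (-p E₁ - q E₂ + E₃)/w:
L = (f_xx + pq)/w, M = (f_xy + (q² - p²)/2)/w, N = (f_yy - pq)/w. -/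
theorem heis_graph_second_fundamental_form
    (Ω : Set (ℝ × ℝ)) (hΩ : IsOpen Ω) (f : ℝ × ℝ → ℝ) (hf : ContDiffOn ℝ (⊤ : ℕ∞) f Ω)
    (z : ℝ × ℝ) (hz : z ∈ Ω) :
    -- p, q, w as functions
    let p : ℝ × ℝ → ℝ := fun w => fderiv ℝ f w (1, 0) + w.2 / 2
    let q : ℝ × ℝ → ℝ := fun w => fderiv ℝ f w (0, 1) - w.1 / 2
    let w : ℝ × ℝ → ℝ := fun w' => Real.sqrt (1 + p w' ^ 2 + q w' ^ 2)
    -- the unit normal in frame components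
    let η : ℝ × ℝ → Fin 3 → ℝ := fun w' => ![-(p w') / w w', -(q w') / w w', 1 / w w']
    -- the tangent vectors X_x = E₁ + pE₃, X_y = E₂ + qE₃ in frame components
    let Xx : ℝ × ℝ → Fin 3 → ℝ := fun w' => ![1, 0, p w']
    let Xy : ℝ × ℝ → Fin 3 → ℝ := fun w' => ![0, 1, q w']
    -- second order partials
    let fxx := fderiv ℝ (fun w' => fderiv ℝ f w' (1, 0)) z (1, 0)
    let fxy := fderiv ℝ (fun w' => fderiv ℝ f w' (1, 0)) z (0, 1)
    let fyy := fderiv ℝ (fun w' => fderiv ℝ f w' (0, 1)) z (0, 1)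
    -- L = -⟨∇_{X_x}η, X_x⟩, M = -⟨∇_{X_x}η, X_y⟩, N = -⟨∇_{X_y}η, X_y⟩
    (-(∑ k : Fin 3, heisCov (1, 0) (Xx z) η z k * Xx z k)
        = (fxx + p z * q z) / w z) ∧
    (-(∑ k : Fin 3, heisCov (1, 0) (Xx z) η z k * Xy z k)
        = (fxy + (q z ^ 2 - p z ^ 2) / 2) / w z) ∧
    (-(∑ k : Fin 3, heisCov (0, 1) (Xy z) η z k * Xy z k)
        = (fyy - p z * q z) / w z) := by
  intro p q w η Xx Xy fxx fxy fyy
  have hmem : Ω ∈ nhds z := hΩ.mem_nhds hz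
  have hfz : ContDiffAt ℝ (⊤ : ℕ∞) f z := hf.contDiffAt hmem
  have hdf : ContDiffAt ℝ 1 (fderiv ℝ f) z := hfz.fderiv_right (WithTop.coe_le_coe.mpr le_top)
  have hdfd : DifferentiableAt ℝ (fderiv ℝ f) z := hdf.differentiableAt one_ne_zero
  set A := fderiv ℝ (fderiv ℝ f) z with hA
  have hsymm : A (1, 0) (0, 1) = A (0, 1) (1, 0) :=
    (hfz.isSymmSndFDerivAt (by rw [minSmoothness_of_isRCLikeNormedField]; exact WithTop.coe_le_coe.mpr (le_top : (2:ℕ∞) ≤ ⊤))) _ _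
  -- derivative of w' ↦ fderiv f w' v
  have hD : ∀ v : ℝ × ℝ, HasFDerivAt (fun w' => fderiv ℝ f w' v) (A.flip v) z := by
    intro v
    have h := (ContinuousLinearMap.apply ℝ ℝ v).hasFDerivAt.comp z hdfd.hasFDerivAt
    refine h.congr_fderiv ?_
    ext x <;> rfl
  -- derivatives of p and q
  have hp : HasFDerivAt p (A.flip (1, 0) + (2:ℝ)⁻¹ • ContinuousLinearMap.snd ℝ ℝ ℝ) z := by
    have h2 : HasFDerivAt (fun w' : ℝ × ℝ => w'.2 / 2)
        ((2:ℝ)⁻¹ • ContinuousLinearMap.snd ℝ ℝ ℝ) z := by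
      exact ((hasFDerivAt_snd (𝕜 := ℝ) (E := ℝ) (F := ℝ) (p := z)).const_smul (2:ℝ)⁻¹).congr_of_eventuallyEq
        (Filter.Eventually.of_forall fun w' => by simp [div_eq_inv_mul])
    exact (hD (1, 0)).add h2
  have hq : HasFDerivAt q (A.flip (0, 1) - (2:ℝ)⁻¹ • ContinuousLinearMap.fst ℝ ℝ ℝ) z := by
    have h2 : HasFDerivAt (fun w' : ℝ × ℝ => w'.1 / 2)
        ((2:ℝ)⁻¹ • ContinuousLinearMap.fst ℝ ℝ ℝ) z := by
      exact ((hasFDerivAt_fst (𝕜 := ℝ) (E := ℝ) (F := ℝ) (p := z)).const_smul (2:ℝ)⁻¹).congr_of_eventuallyEq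
        (Filter.Eventually.of_forall fun w' => by simp [div_eq_inv_mul])
    exact (hD (0, 1)).sub h2
  -- w and its derivative
  have hspos : (0:ℝ) < 1 + p z ^ 2 + q z ^ 2 := by positivity
  have hwz : w z = Real.sqrt (1 + p z ^ 2 + q z ^ 2) := rfl
  have hWpos : (0:ℝ) < w z := by rw [hwz]; exact Real.sqrt_pos.mpr hspos
  have hWne : w z ≠ 0 := ne_of_gt hWpos
  have hW2 : w z ^ 2 = 1 + p z ^ 2 + q z ^ 2 := by
    rw [hwz]; exact Real.sq_sqrt hspos.le
  have hinner : HasFDerivAt (fun w' => 1 + p w' ^ 2 + q w' ^ 2)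
      ((0 : ℝ × ℝ →L[ℝ] ℝ)
        + ((2:ℝ) * p z ^ 1) • (A.flip (1, 0) + (2:ℝ)⁻¹ • ContinuousLinearMap.snd ℝ ℝ ℝ)
        + ((2:ℝ) * q z ^ 1) • (A.flip (0, 1) - (2:ℝ)⁻¹ • ContinuousLinearMap.fst ℝ ℝ ℝ)) z :=
    ((hasFDerivAt_const (1:ℝ) z).add (heis_hasFDerivAt_sq hp)).add (heis_hasFDerivAt_sq hq)
  have hw : HasFDerivAt w
      ((1 / (2 * Real.sqrt (1 + p z ^ 2 + q z ^ 2))) •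
        ((0 : ℝ × ℝ →L[ℝ] ℝ)
          + ((2:ℝ) * p z ^ 1) • (A.flip (1, 0) + (2:ℝ)⁻¹ • ContinuousLinearMap.snd ℝ ℝ ℝ)
          + ((2:ℝ) * q z ^ 1) • (A.flip (0, 1) - (2:ℝ)⁻¹ • ContinuousLinearMap.fst ℝ ℝ ℝ))) z :=
    hinner.sqrt (ne_of_gt hspos)
  -- derivatives of the components of η
  have hc1 := heis_hasFDerivAt_div hp.neg hw hWne
  have hc2 := heis_hasFDerivAt_div hq.neg hw hWne
  have hc3 := heis_hasFDerivAt_div (hasFDerivAt_const (1:ℝ) z) hw hWne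
  have e1 : fderiv ℝ (fun y => -p y / w y) z = _ := hc1.fderiv
  have e2 : fderiv ℝ (fun y => -q y / w y) z = _ := hc2.fderiv
  have e3 := hc3.fderiv
  have eD1 : fderiv ℝ (fun w' => fderiv ℝ f w' (1, 0)) z = A.flip (1, 0) := (hD (1, 0)).fderiv
  have eD2 : fderiv ℝ (fun w' => fderiv ℝ f w' (0, 1)) z = A.flip (0, 1) := (hD (0, 1)).fderiv
  have h1 : (A.flip (0, 1)) (1, 0) = (A.flip (1, 0)) (0, 1) := hsymm
  refine ⟨?_, ?_, ?_⟩
  all_goals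
    simp only [heisCov, heisGamma, Fin.sum_univ_three, η, Xx, Xy,
      Matrix.cons_val_zero, Matrix.cons_val_one, Matrix.head_cons,
      Matrix.cons_val_two, Matrix.tail_cons]
    rw [e1, e2, e3]
    simp only [fxx, fxy, fyy, eD1, eD2,
      ContinuousLinearMap.add_apply, ContinuousLinearMap.sub_apply,
      ContinuousLinearMap.coe_smul', Pi.smul_apply, smul_eq_mul,
      ContinuousLinearMap.flip_apply, ContinuousLinearMap.zero_apply,
      ContinuousLinearMap.coe_fst', ContinuousLinearMap.coe_snd',
      ContinuousLinearMap.neg_apply, Pi.neg_apply, h1]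
    rw [← hwz]
    field_simp
    ring
end

section
/- If S is the graph of a smooth function f over an open set Ω ⊆ ℝ² and its Gauss map φ(x,y) = (-(f_x+y/2), -(f_y-x/2)) is constant on Ω, then Ω is empty; i.e., no graph over the xy-plane in the Heisenberg group has constant Gauss map. -/
open Topology

/-- No graph over the xy-plane in the Heisenberg group has constant Gauss map:
if the Gauss map φ(x,y) = (-(f_x + y/2), -(f_y - x/2)) of the graph of a smooth
f : Ω → ℝ is constant on the open set Ω, then Ω is empty. -/
theorem heis_no_graph_with_constant_gauss_map
    (Ω : Set (ℝ × ℝ)) (hΩ : IsOpen Ω) (f : ℝ × ℝ → ℝ) (hf : ContDiffOn ℝ (⊤ : ℕ∞) f Ω)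
    (c : ℝ × ℝ)
    (hconst : ∀ z ∈ Ω,
      (-(fderiv ℝ f z (1, 0) + z.2 / 2), -(fderiv ℝ f z (0, 1) - z.1 / 2)) = c) :
    Ω = ∅ := by
  by_contra h
  obtain ⟨z, hz⟩ := Set.nonempty_iff_ne_empty.2 h
  have hmem : Ω ∈ 𝓝 z := hΩ.mem_nhds hz
  -- f is differentiable at every point of Ω, and the derivative map is differentiable at z
  have hdiff : ∀ y ∈ Ω, DifferentiableAt ℝ f y := fun y hy =>
    (hf.contDiffAt (hΩ.mem_nhds hy)).differentiableAt (by simp)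
  have hF : DifferentiableAt ℝ (fderiv ℝ f) z :=
    ((hf.contDiffAt hmem).fderiv_right (m := 1) (WithTop.coe_le_coe.2 le_top)).differentiableAt one_ne_zero
  set F'' := fderiv ℝ (fderiv ℝ f) z with hF''
  have hxz : HasFDerivAt (fderiv ℝ f) F'' z := hF.hasFDerivAt
  have hev : ∀ᶠ y in 𝓝 z, HasFDerivAt f (fderiv ℝ f y) y := by
    filter_upwards [hmem] with y hy using (hdiff y hy).hasFDerivAt
  have hsymm : F'' (1, 0) (0, 1) = F'' (0, 1) (1, 0) :=
    second_derivative_symmetric_of_eventually hev hxz (1, 0) (0, 1)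
  -- components of the constant Gauss map
  have h1 : (fun y : ℝ × ℝ => fderiv ℝ f y (1, 0)) =ᶠ[𝓝 z]
      (fun y : ℝ × ℝ => -c.1 - y.2 / 2) := by
    filter_upwards [hmem] with y hy
    have := congrArg Prod.fst (hconst y hy)
    simp only at this
    linarith
  have h2 : (fun y : ℝ × ℝ => fderiv ℝ f y (0, 1)) =ᶠ[𝓝 z]
      (fun y : ℝ × ℝ => -c.2 + y.1 / 2) := by
    filter_upwards [hmem] with y hy
    have := congrArg Prod.snd (hconst y hy)
    simp only at this
    linarith
  -- evaluation maps
  have hA1 : HasFDerivAt (fun y : ℝ × ℝ => fderiv ℝ f y (1, 0))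
      ((ContinuousLinearMap.apply ℝ ℝ ((1 : ℝ), (0 : ℝ))).comp F'') z :=
    (ContinuousLinearMap.apply ℝ ℝ ((1 : ℝ), (0 : ℝ))).hasFDerivAt.comp z hxz
  have hA2 : HasFDerivAt (fun y : ℝ × ℝ => fderiv ℝ f y (0, 1))
      ((ContinuousLinearMap.apply ℝ ℝ ((0 : ℝ), (1 : ℝ))).comp F'') z :=
    (ContinuousLinearMap.apply ℝ ℝ ((0 : ℝ), (1 : ℝ))).hasFDerivAt.comp z hxz
  -- explicit derivatives of the affine expressions
  have hB1 : HasFDerivAt (fun y : ℝ × ℝ => -c.1 - y.2 / 2)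
      (-((2⁻¹ : ℝ) • ContinuousLinearMap.snd ℝ ℝ ℝ)) z := by
    have : HasFDerivAt (fun y : ℝ × ℝ => y.2 / 2)
        ((2⁻¹ : ℝ) • ContinuousLinearMap.snd ℝ ℝ ℝ) z := by
      have := (hasFDerivAt_snd (p := z) (𝕜 := ℝ) (E := ℝ) (F := ℝ)).mul_const (2⁻¹ : ℝ)
      simpa [div_eq_mul_inv, one_div] using this
    exact this.const_sub (-c.1)
  have hB2 : HasFDerivAt (fun y : ℝ × ℝ => -c.2 + y.1 / 2)
      ((2⁻¹ : ℝ) • ContinuousLinearMap.fst ℝ ℝ ℝ) z := by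
    have : HasFDerivAt (fun y : ℝ × ℝ => y.1 / 2)
        ((2⁻¹ : ℝ) • ContinuousLinearMap.fst ℝ ℝ ℝ) z := by
      have := (hasFDerivAt_fst (p := z) (𝕜 := ℝ) (E := ℝ) (F := ℝ)).mul_const (2⁻¹ : ℝ)
      simpa [div_eq_mul_inv, one_div] using this
    exact this.const_add (-c.2)
  -- compare derivatives via eventual equality
  have e1 : ((ContinuousLinearMap.apply ℝ ℝ ((1 : ℝ), (0 : ℝ))).comp F'')
      = (-((2⁻¹ : ℝ) • ContinuousLinearMap.snd ℝ ℝ ℝ)) := by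
    have := hA1.fderiv
    rw [Filter.EventuallyEq.fderiv_eq h1, hB1.fderiv] at this
    exact this.symm
  have e2 : ((ContinuousLinearMap.apply ℝ ℝ ((0 : ℝ), (1 : ℝ))).comp F'')
      = ((2⁻¹ : ℝ) • ContinuousLinearMap.fst ℝ ℝ ℝ) := by
    have := hA2.fderiv
    rw [Filter.EventuallyEq.fderiv_eq h2, hB2.fderiv] at this
    exact this.symm
  have v1 : F'' (0, 1) (1, 0) = -(2⁻¹ : ℝ) := by
    have := DFunLike.congr_fun e1 ((0 : ℝ), (1 : ℝ))
    simpa using this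
  have v2 : F'' (1, 0) (0, 1) = (2⁻¹ : ℝ) := by
    have := DFunLike.congr_fun e2 ((1 : ℝ), (0 : ℝ))
    simpa using this
  rw [v1, v2] at hsymm
  norm_num at hsymm
end

section
/- Let f: Ω → ℝ be a smooth solution of the minimal graph equation (1+q²)f_xx - 2pq f_xy + (1+p²)f_yy = 0 on a connected open set Ω, where p = f_x+y/2, q = f_y-x/2, and suppose the Gauss map φ = (-p,-q) is conformal with respect to the graph metric on S and the Gans metric h on ℝ², with dφ ≠ 0 everywhere. Then f_xx = f_xy = f_yy = 0 on Ω, i.e., S is a plane f(x,y) = ax + by + c. -/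
/-- A continuous linear map on `ℝ × ℝ` vanishing on the two standard basis vectors is zero. -/
lemma clm_ext2 {E : Type*} [NormedAddCommGroup E] [NormedSpace ℝ E] {L : (ℝ × ℝ) →L[ℝ] E}
    (h1 : L (1, 0) = 0) (h2 : L (0, 1) = 0) : L = 0 := by
  refine ContinuousLinearMap.ext fun U => ?_
  have hU : (U : ℝ × ℝ) = U.1 • ((1 : ℝ), (0 : ℝ)) + U.2 • ((0 : ℝ), (1 : ℝ)) := by
    ext <;> simp
  rw [hU, map_add, map_smul, map_smul, h1, h2, smul_zero, smul_zero, add_zero]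
  simp

/-- A differentiable function with vanishing derivative on an open preconnected set is constant. -/
lemma const_on_of_fderiv_eq_zero {E : Type*} [NormedAddCommGroup E] [NormedSpace ℝ E]
    {s : Set (ℝ × ℝ)} (hs : IsOpen s) (hc : IsPreconnected s)
    {g : ℝ × ℝ → E} (hg : ∀ x ∈ s, DifferentiableAt ℝ g x)
    (h0 : ∀ x ∈ s, fderiv ℝ g x = 0) {x₀ : ℝ × ℝ} (hx₀ : x₀ ∈ s) :
    ∀ x ∈ s, g x = g x₀ := by
  have hball : ∀ y ∈ s, ∃ ε > 0, Metric.ball y ε ⊆ s ∧ ∀ w ∈ Metric.ball y ε, g w = g y := by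
    intro y hy
    obtain ⟨ε, hε, hεs⟩ := Metric.isOpen_iff.1 hs y hy
    refine ⟨ε, hε, hεs, fun w hw => ?_⟩
    refine (convex_ball y ε).is_const_of_fderivWithin_eq_zero
      (fun z hz => (hg z (hεs hz)).differentiableWithinAt) (fun z hz => ?_) hw
      (Metric.mem_ball_self hε)
    rw [fderivWithin_of_isOpen Metric.isOpen_ball hz]
    exact h0 z (hεs hz)
  set u : Set (ℝ × ℝ) :=
    {y | ∃ ε > 0, Metric.ball y ε ⊆ s ∧ ∀ w ∈ Metric.ball y ε, g w = g x₀} with hu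
  set v : Set (ℝ × ℝ) :=
    {y | ∃ ε > 0, Metric.ball y ε ⊆ s ∧ ∀ w ∈ Metric.ball y ε, g w ≠ g x₀} with hv
  have houv : IsOpen u ∧ IsOpen v := by
    constructor <;>
    · refine Metric.isOpen_iff.2 ?_
      rintro y ⟨ε, hε, hεs, hgw⟩
      refine ⟨ε, hε, ?_⟩
      intro y' hy'
      refine ⟨ε - dist y' y, by simpa using hy', fun w hw => hεs ?_, fun w hw => hgw w ?_⟩ <;>
      · have := Metric.mem_ball.1 hw
        refine Metric.mem_ball.2 ?_
        have := dist_triangle w y' y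
        linarith [Metric.mem_ball.1 hw]
  have hdisj : Disjoint u v := by
    rw [Set.disjoint_left]
    rintro y ⟨ε₁, hε₁, _, h₁⟩ ⟨ε₂, hε₂, _, h₂⟩
    exact h₂ y (Metric.mem_ball_self hε₂) (h₁ y (Metric.mem_ball_self hε₁))
  have hsuv : s ⊆ u ∪ v := by
    intro y hy
    obtain ⟨ε, hε, hεs, hgw⟩ := hball y hy
    by_cases hgy : g y = g x₀
    · exact Or.inl ⟨ε, hε, hεs, fun w hw => (hgw w hw).trans hgy⟩
    · exact Or.inr ⟨ε, hε, hεs, fun w hw => (hgw w hw) ▸ hgy⟩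
  have hx₀u : x₀ ∈ u := by
    obtain ⟨ε, hε, hεs, hgw⟩ := hball x₀ hx₀
    exact ⟨ε, hε, hεs, hgw⟩
  have hsu : s ⊆ u :=
    hc.subset_left_of_subset_union houv.1 houv.2 hdisj hsuv ⟨x₀, hx₀, hx₀u⟩
  intro x hx
  obtain ⟨ε, hε, _, hgw⟩ := hsu hx
  exact hgw x (Metric.mem_ball_self hε)

/-- The pointwise algebraic heart of the theorem: conformality of the Gauss map together
with the minimal surface equation forces all second derivatives to vanish. -/
lemma heis_key (p q r s t lam : ℝ)
    (h1 : (1 + q ^ 2) * (-r) * (-r) - p * q * ((-r) * (2⁻¹ - s) + (2⁻¹ - s) * (-r))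
        + (1 + p ^ 2) * (2⁻¹ - s) * (2⁻¹ - s) = lam * (1 + p ^ 2) * (1 + p ^ 2 + q ^ 2))
    (h2 : (1 + q ^ 2) * (-r) * (-s - 2⁻¹) - p * q * ((-r) * (-t) + (2⁻¹ - s) * (-s - 2⁻¹))
        + (1 + p ^ 2) * (2⁻¹ - s) * (-t) = lam * (p * q) * (1 + p ^ 2 + q ^ 2))
    (h3 : (1 + q ^ 2) * (-s - 2⁻¹) * (-s - 2⁻¹) - p * q * ((-s - 2⁻¹) * (-t) + (-t) * (-s - 2⁻¹))
        + (1 + p ^ 2) * (-t) * (-t) = lam * (1 + q ^ 2) * (1 + p ^ 2 + q ^ 2))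
    (h4 : (1 + q ^ 2) * r - 2 * (p * q) * s + (1 + p ^ 2) * t = 0) :
    r = 0 ∧ s = 0 ∧ t = 0 := by
  have hD : (0 : ℝ) < 1 + p ^ 2 + q ^ 2 := by positivity
  have L1 : (2 * (1 + p ^ 2 + q ^ 2)) * (p * q * r - (1 + p ^ 2) * s) = 0 := by
    linear_combination (2 * (1 + p ^ 2 + q ^ 2) - (1 + p ^ 2) * (1 + q ^ 2)) * h1
      + (2 * p * q * (1 + p ^ 2)) * h2 - (1 + p ^ 2) ^ 2 * h3
      + (-(2 * (1 + p ^ 2 + q ^ 2) * r)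
          + (1 + p ^ 2) * ((1 + q ^ 2) * r - 2 * (p * q) * s + (1 + p ^ 2) * t)) * h4
  have L2 : ((1 + p ^ 2 + q ^ 2)) * ((1 + q ^ 2) * r - (1 + p ^ 2) * t) = 0 := by
    linear_combination (-(p * q) * (1 + q ^ 2)) * h1
      + (2 * (1 + p ^ 2 + q ^ 2) + 2 * p ^ 2 * q ^ 2) * h2 + (-(p * q) * (1 + p ^ 2)) * h3
      + (-(2 * (1 + p ^ 2 + q ^ 2) * s)
          + p * q * ((1 + q ^ 2) * r - 2 * (p * q) * s + (1 + p ^ 2) * t)) * h4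
  have r1 : p * q * r - (1 + p ^ 2) * s = 0 := by
    rcases mul_eq_zero.mp L1 with h | h
    · exact absurd h (by positivity)
    · exact h
  have r2 : (1 + q ^ 2) * r - (1 + p ^ 2) * t = 0 := by
    rcases mul_eq_zero.mp L2 with h | h
    · exact absurd h (by positivity)
    · exact h
  have l4 : (1 + q ^ 2) * r - p * q * s = 0 := by linear_combination h4 / 2 + r2 / 2
  have hr : (1 + p ^ 2 + q ^ 2) * r = 0 := by
    linear_combination (1 + p ^ 2) * l4 - p * q * r1
  have hrz : r = 0 := by
    rcases mul_eq_zero.mp hr with h | h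
    · exact absurd h (by positivity)
    · exact h
  have hsz : s = 0 := by
    have hps : (1 + p ^ 2) * s = 0 := by linear_combination -r1 + p * q * hrz
    rcases mul_eq_zero.mp hps with h | h
    · exact absurd h (by positivity)
    · exact h
  have htz : t = 0 := by
    have hpt : (1 + p ^ 2) * t = 0 := by linear_combination -r2 + (1 + q ^ 2) * hrz
    rcases mul_eq_zero.mp hpt with h | h
    · exact absurd h (by positivity)
    · exact h
  exact ⟨hrz, hsz, htz⟩

/-- A minimal graph in the Heisenberg group whose Gauss map is conformal (with
nonvanishing differential) is a plane: f_xx = f_xy = f_yy = 0, i.e.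
f(x,y) = ax + by + c. -/
theorem heis_minimal_graph_conformal_gauss_map_is_plane
    (Ω : Set (ℝ × ℝ)) (hΩ : IsOpen Ω) (hconn : IsConnected Ω)
    (f : ℝ × ℝ → ℝ) (hf : ContDiffOn ℝ (⊤ : ℕ∞) f Ω)
    (p q : ℝ × ℝ → ℝ)
    (hp : ∀ z, p z = fderiv ℝ f z (1, 0) + z.2 / 2)
    (hq : ∀ z, q z = fderiv ℝ f z (0, 1) - z.1 / 2)
    (φ : ℝ × ℝ → ℝ × ℝ) (hφ : ∀ z, φ z = (-(p z), -(q z)))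
    -- f solves the minimal graph equation on Ω
    (hmin : ∀ z ∈ Ω,
      (1 + q z ^ 2) * fderiv ℝ (fun w => fderiv ℝ f w (1, 0)) z (1, 0)
        - 2 * p z * q z * fderiv ℝ (fun w => fderiv ℝ f w (1, 0)) z (0, 1)
        + (1 + p z ^ 2) * fderiv ℝ (fun w => fderiv ℝ f w (0, 1)) z (0, 1) = 0)
    -- the differential of the Gauss map is everywhere nonzero
    (hrank : ∀ z ∈ Ω, fderiv ℝ φ z ≠ 0)
    -- the Gauss map is conformal from the graph metric to the Gans metric
    (lam : ℝ × ℝ → ℝ)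
    (hconf : ∀ z ∈ Ω, 0 < lam z ∧ ∀ U V : ℝ × ℝ,
      gansBil (φ z) (fderiv ℝ φ z U) (fderiv ℝ φ z V)
        = lam z * ((1 + p z ^ 2) * U.1 * V.1 + p z * q z * (U.1 * V.2 + U.2 * V.1)
            + (1 + q z ^ 2) * U.2 * V.2)) :
    (∀ z ∈ Ω,
      fderiv ℝ (fun w => fderiv ℝ f w (1, 0)) z (1, 0) = 0 ∧
      fderiv ℝ (fun w => fderiv ℝ f w (1, 0)) z (0, 1) = 0 ∧
      fderiv ℝ (fun w => fderiv ℝ f w (0, 1)) z (0, 1) = 0) ∧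
    ∃ a b c : ℝ, ∀ z ∈ Ω, f z = a * z.1 + b * z.2 + c := by
  -- Main pointwise statement
  have H : ∀ z ∈ Ω,
      (fderiv ℝ (fun w => fderiv ℝ f w (1, 0)) z (1, 0) = 0 ∧
       fderiv ℝ (fun w => fderiv ℝ f w (1, 0)) z (0, 1) = 0 ∧
       fderiv ℝ (fun w => fderiv ℝ f w (0, 1)) z (0, 1) = 0) ∧
      fderiv ℝ (fderiv ℝ f) z = 0 := by
    intro z hz
    have hfa : ContDiffAt ℝ (⊤ : ℕ∞) f z := hf.contDiffAt (hΩ.mem_nhds hz)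
    have hfd : ContDiffAt ℝ 1 (fderiv ℝ f) z := hfa.fderiv_right (WithTop.coe_le_coe.2 le_top)
    have hdd : DifferentiableAt ℝ (fderiv ℝ f) z := hfd.differentiableAt one_ne_zero
    set B := fderiv ℝ (fderiv ℝ f) z with hB
    have hsymm : ∀ v w, B v w = B w v := fun v w => (hfa.isSymmSndFDerivAt (by rw [minSmoothness_of_isRCLikeNormedField]; exact WithTop.coe_le_coe.2 le_top)) v w
    -- derivatives of the maps w ↦ f_x(w) and w ↦ f_y(w)
    have hg1 : HasFDerivAt (fun w => fderiv ℝ f w ((1 : ℝ), (0 : ℝ)))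
        (B.flip ((1 : ℝ), (0 : ℝ))) z := by
      have := hdd.hasFDerivAt.clm_apply (hasFDerivAt_const ((1 : ℝ), (0 : ℝ)) z)
      simpa using this
    have hg2 : HasFDerivAt (fun w => fderiv ℝ f w ((0 : ℝ), (1 : ℝ)))
        (B.flip ((0 : ℝ), (1 : ℝ))) z := by
      have := hdd.hasFDerivAt.clm_apply (hasFDerivAt_const ((0 : ℝ), (1 : ℝ)) z)
      simpa using this
    have hE1 : fderiv ℝ (fun w => fderiv ℝ f w ((1 : ℝ), (0 : ℝ))) z (1, 0) = B (1, 0) (1, 0) := by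
      rw [hg1.fderiv]; rfl
    have hE2 : fderiv ℝ (fun w => fderiv ℝ f w ((1 : ℝ), (0 : ℝ))) z (0, 1) = B (0, 1) (1, 0) := by
      rw [hg1.fderiv]; rfl
    have hE3 : fderiv ℝ (fun w => fderiv ℝ f w ((0 : ℝ), (1 : ℝ))) z (0, 1) = B (0, 1) (0, 1) := by
      rw [hg2.fderiv]; rfl
    -- derivative of p and q
    have hpe : p = fun w => fderiv ℝ f w ((1 : ℝ), (0 : ℝ)) + (2⁻¹ : ℝ) * w.2 := by
      funext w; rw [hp w]; ring
    have hqe : q = fun w => fderiv ℝ f w ((0 : ℝ), (1 : ℝ)) + (-2⁻¹ : ℝ) * w.1 := by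
      funext w; rw [hq w]; ring
    have hP : HasFDerivAt p
        (B.flip ((1 : ℝ), (0 : ℝ)) + (2⁻¹ : ℝ) • ContinuousLinearMap.snd ℝ ℝ ℝ) z := by
      rw [hpe]
      exact hg1.add (hasFDerivAt_snd.const_mul (2⁻¹ : ℝ))
    have hQ : HasFDerivAt q
        (B.flip ((0 : ℝ), (1 : ℝ)) + (-2⁻¹ : ℝ) • ContinuousLinearMap.fst ℝ ℝ ℝ) z := by
      rw [hqe]
      exact hg2.add (hasFDerivAt_fst.const_mul (-2⁻¹ : ℝ))
    have hφe : φ = fun w => (-(p w), -(q w)) := funext hφ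
    have hΦ : HasFDerivAt φ
        ((-(B.flip ((1 : ℝ), (0 : ℝ)) + (2⁻¹ : ℝ) • ContinuousLinearMap.snd ℝ ℝ ℝ)).prod
         (-(B.flip ((0 : ℝ), (1 : ℝ)) + (-2⁻¹ : ℝ) • ContinuousLinearMap.fst ℝ ℝ ℝ))) z := by
      rw [hφe]
      exact hP.neg.prodMk hQ.neg
    have hJ := hΦ.fderiv
    have hJ10 : fderiv ℝ φ z ((1 : ℝ), (0 : ℝ))
        = (-(B (1, 0) (1, 0)), 2⁻¹ - B (0, 1) (1, 0)) := by
      rw [hJ]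
      simp [hsymm (1, 0) (0, 1)]
      ring
    have hJ01 : fderiv ℝ φ z ((0 : ℝ), (1 : ℝ))
        = (-(B (0, 1) (1, 0)) - 2⁻¹, -(B (0, 1) (0, 1))) := by
      rw [hJ]
      simp
      ring
    -- the conformality equations
    have hDne : (1 + (-(p z)) ^ 2 + (-(q z)) ^ 2) ≠ 0 := by positivity
    have hc1 := (hconf z hz).2 (1, 0) (1, 0)
    have hc2 := (hconf z hz).2 (1, 0) (0, 1)
    have hc3 := (hconf z hz).2 (0, 1) (0, 1)
    rw [hJ10, hφ z] at hc1
    rw [hJ10, hJ01, hφ z] at hc2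
    rw [hJ01, hφ z] at hc3
    simp only [gansBil] at hc1 hc2 hc3
    rw [div_eq_iff hDne] at hc1 hc2 hc3
    have hminz := hmin z hz
    rw [hE1, hE2, hE3] at hminz
    obtain ⟨hr0, hs0, ht0⟩ := heis_key (p z) (q z) (B (1, 0) (1, 0)) (B (0, 1) (1, 0))
      (B (0, 1) (0, 1)) (lam z) (by linear_combination hc1) (by linear_combination hc2)
      (by linear_combination hc3) (by linear_combination hminz)
    refine ⟨⟨by rw [hE1, hr0], by rw [hE2, hs0], by rw [hE3, ht0]⟩, ?_⟩
    apply clm_ext2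
    · apply clm_ext2
      · exact hr0
      · rw [hsymm (1, 0) (0, 1)]; exact hs0
    · exact clm_ext2 hs0 ht0
  refine ⟨fun z hz => (H z hz).1, ?_⟩
  -- the plane part
  obtain ⟨z₀, hz₀⟩ := hconn.nonempty
  have hdf : ∀ x ∈ Ω, DifferentiableAt ℝ (fderiv ℝ f) x := fun x hx =>
    ((hf.contDiffAt (hΩ.mem_nhds hx)).fderiv_right (m := 1) (WithTop.coe_le_coe.2 le_top)).differentiableAt
      one_ne_zero
  have hconst : ∀ x ∈ Ω, fderiv ℝ f x = fderiv ℝ f z₀ :=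
    const_on_of_fderiv_eq_zero hΩ hconn.isPreconnected hdf (fun x hx => (H x hx).2) hz₀
  set a := fderiv ℝ f z₀ ((1 : ℝ), (0 : ℝ)) with ha
  set b := fderiv ℝ f z₀ ((0 : ℝ), (1 : ℝ)) with hb
  set c := f z₀ - (a * z₀.1 + b * z₀.2) with hc
  refine ⟨a, b, c, ?_⟩
  have hLaff : fderiv ℝ f z₀
      = a • ContinuousLinearMap.fst ℝ ℝ ℝ + b • ContinuousLinearMap.snd ℝ ℝ ℝ := by
    have : fderiv ℝ f z₀ - (a • ContinuousLinearMap.fst ℝ ℝ ℝ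
        + b • ContinuousLinearMap.snd ℝ ℝ ℝ) = 0 := by
      apply clm_ext2 <;> simp [ha, hb]
    have := sub_eq_zero.mp this
    exact this
  set F := fun w : ℝ × ℝ => f w - (a * w.1 + b * w.2 + c) with hF
  have hFd : ∀ x ∈ Ω, HasFDerivAt F (0 : (ℝ × ℝ) →L[ℝ] ℝ) x := by
    intro x hx
    have hfx : DifferentiableAt ℝ f x :=
      (hf.contDiffAt (hΩ.mem_nhds hx)).differentiableAt (by simp)
    have hL : HasFDerivAt (fun w : ℝ × ℝ => a * w.1 + b * w.2 + c)
        (a • ContinuousLinearMap.fst ℝ ℝ ℝ + b • ContinuousLinearMap.snd ℝ ℝ ℝ) x := by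
      exact (((hasFDerivAt_fst : HasFDerivAt Prod.fst (ContinuousLinearMap.fst ℝ ℝ ℝ) x).const_mul
        a).add ((hasFDerivAt_snd : HasFDerivAt Prod.snd
          (ContinuousLinearMap.snd ℝ ℝ ℝ) x).const_mul b)).add_const c
    have := hfx.hasFDerivAt.sub hL
    rw [show fderiv ℝ f x = a • ContinuousLinearMap.fst ℝ ℝ ℝ
        + b • ContinuousLinearMap.snd ℝ ℝ ℝ from (hconst x hx).trans hLaff] at this
    exact (by simpa using this : HasFDerivAt (f - fun w : ℝ × ℝ => a * w.1 + b * w.2 + c) 0 x)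
  have hFconst : ∀ x ∈ Ω, F x = F z₀ :=
    const_on_of_fderiv_eq_zero hΩ hconn.isPreconnected
      (fun x hx => (hFd x hx).differentiableAt)
      (fun x hx => (hFd x hx).fderiv) hz₀
  intro z hz
  have h1 := hFconst z hz
  have h2 : F z₀ = 0 := by simp only [hF, hc]; ring
  rw [h2] at h1
  have : f z - (a * z.1 + b * z.2 + c) = 0 := h1
  linarith [this]
end
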